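/- If δ(Φ,Ψ) ≤ ε, then for every finite-dimensional ancilla K₀ and every ensemble E on H ⊗ K₀, the maximal success probabilities satisfy P_succ((Φ⊗id)(E)) ≤ P_succ((Ψ⊗id)(E)) + (ε/2)·P_succ(E). -/

import Mathlib

open scoped Matrix Kronecker ComplexOrder Matrix.Norms.L2Operator

noncomputable section

/-- Square complex matrices indexed by `ι`. -/
abbrev Mat (ι : Type) [Fintype ι] [DecidableEq ι] : Type := Matrix ι ι ℂ

/-- Linear maps between matrix algebras. -/
abbrev MatMap (ι κ : Type) [Fintype ι] [DecidableEq ι] [Fintype κ] [DecidableEq κ] : Type :=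
  Mat ι →ₗ[ℂ] Mat κ

variable {ι κ μ ν : Type} [Fintype ι] [DecidableEq ι] [Fintype κ] [DecidableEq κ]
  [Fintype μ] [DecidableEq μ] [Fintype ν] [DecidableEq ν]

/-- `φ ⊗ id_τ`, the amplification of `φ` with the identity on `Mat τ`. -/
def tensorId (φ : MatMap ι κ) (τ : Type) [Fintype τ] [DecidableEq τ] :
    Matrix (ι × τ) (ι × τ) ℂ →ₗ[ℂ] Matrix (κ × τ) (κ × τ) ℂ where
  toFun X := Matrix.of fun p q => φ (Matrix.of fun i j => X (i, p.2) (j, q.2)) p.1 q.1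
  map_add' X Y := by
    funext p q
    show φ (Matrix.of fun i j => (X + Y) (i, p.2) (j, q.2)) p.1 q.1 = _
    rw [show (Matrix.of fun i j => (X + Y) (i, p.2) (j, q.2))
        = (Matrix.of fun i j => X (i, p.2) (j, q.2))
          + (Matrix.of fun i j => Y (i, p.2) (j, q.2)) from rfl, map_add]
    rfl
  map_smul' c X := by
    funext p q
    show φ (Matrix.of fun i j => (c • X) (i, p.2) (j, q.2)) p.1 q.1 = _
    rw [show (Matrix.of fun i j => (c • X) (i, p.2) (j, q.2))
        = c • (Matrix.of fun i j => X (i, p.2) (j, q.2)) from rfl, map_smul]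
    rfl

/-- `φ` is Hermitian-preserving. -/
def IsHermitianPreserving (φ : MatMap ι κ) : Prop := ∀ X, (φ X)ᴴ = φ Xᴴ

/-- `φ` is completely positive: all amplifications by finite-dimensional identities
preserve positive semidefiniteness. -/
def IsCP (φ : MatMap ι κ) : Prop :=
  ∀ (l : ℕ) (X : Matrix (ι × Fin l) (ι × Fin l) ℂ), X.PosSemidef →
    (tensorId φ (Fin l) X).PosSemidef

/-- `φ` is trace-preserving. -/
def IsTP (φ : MatMap ι κ) : Prop := ∀ X, (φ X).trace = X.trace

/-- A channel is a completely positive trace-preserving map. -/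
def IsChannel (φ : MatMap ι κ) : Prop := IsCP φ ∧ IsTP φ

/-- Density operator. -/
def IsState (σ : Mat ι) : Prop := σ.PosSemidef ∧ σ.trace = 1

/-- The Choi matrix of `φ`. -/
def choiMatrix (φ : MatMap ι κ) : Matrix (κ × ι) (κ × ι) ℂ :=
  Matrix.of fun p q => φ (Matrix.single p.2 q.2 1) p.1 q.1

/-- The tracelike functional `s`. -/
def sFun (φ : MatMap ι ι) : ℂ :=
  ∑ i, ∑ j, φ (Matrix.single i j 1) i j

/-- The pairing `⟨ψ, φ⟩ = s(ψ ∘ φ)`. -/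
def pairing (ψ : MatMap κ ι) (φ : MatMap ι κ) : ℂ := sFun (ψ ∘ₗ φ)

/-- The erasure map `A ↦ Tr[A] σ`. -/
def erasure (σ : Mat κ) : MatMap ι κ :=
  (Matrix.traceLinearMap ι ℂ ℂ).smulRight σ

/-- The diamond norm, via its order-theoretic characterization. -/
noncomputable def diamondNorm (φ : MatMap ι κ) : ℝ :=
  sInf {r : ℝ | 0 < r ∧ ∃ α : MatMap ι κ, IsChannel α ∧
    IsCP ((r : ℂ) • α - φ) ∧ IsCP ((r : ℂ) • α + φ)}

/-- The dual diamond norm, via its order-theoretic characterization. -/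
noncomputable def dualDiamondNorm (ψ : MatMap ι κ) : ℝ :=
  sInf {r : ℝ | 0 < r ∧ ∃ σ : Mat κ, IsState σ ∧
    IsCP ((r : ℂ) • erasure (ι := ι) σ - ψ) ∧ IsCP ((r : ℂ) • erasure (ι := ι) σ + ψ)}

/-- The Hilbert–Schmidt (trace-duality) adjoint of `ψ`. -/
def adjointMap (ψ : MatMap ι κ) : MatMap κ ι where
  toFun A := Matrix.of fun i j => (A * ψ (Matrix.single j i 1)).trace
  map_add' A B := by funext i j; simp [Matrix.add_mul]
  map_smul' c A := by funext i j; simp [Matrix.smul_mul]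

/-- The cq-map associated with a family of operators. -/
def cqMap {n : ℕ} (A : Fin n → Mat ι) : MatMap (Fin n) ι where
  toFun X := ∑ i, X i i • A i
  map_add' X Y := by simp [Matrix.add_apply, add_smul, Finset.sum_add_distrib]
  map_smul' c X := by simp [Matrix.smul_apply, smul_smul, Finset.smul_sum]

/-- The qc-map associated with a family of operators. -/
def qcMap {n : ℕ} (B : Fin n → Mat ι) : MatMap ι (Fin n) where
  toFun X := Matrix.diagonal fun i => (X * B i).trace
  map_add' X Y := by
    funext i j
    by_cases h : i = j <;>
      simp [Matrix.add_mul, Matrix.diagonal, Matrix.of_apply, h]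
  map_smul' c X := by
    funext i j
    by_cases h : i = j <;>
      simp [Matrix.smul_mul, Matrix.diagonal, Matrix.of_apply, h]

/-- A POVM with `n` outcomes. -/
def IsPOVM {n : ℕ} (M : Fin n → Mat ι) : Prop :=
  (∀ i, (M i).PosSemidef) ∧ ∑ i, M i = 1

/-- An ensemble: probabilities with states. -/
def IsEnsemble {n : ℕ} (lam : Fin n → ℝ) (σ : Fin n → Mat ι) : Prop :=
  (∀ i, 0 < lam i) ∧ (∑ i, lam i = 1) ∧ ∀ i, IsState (σ i)

/-- Optimal success probability of guessing among the states of an ensemble. -/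
noncomputable def pSucc {n : ℕ} (lam : Fin n → ℝ) (σ : Fin n → Mat ι) : ℝ :=
  sSup {r : ℝ | ∃ M : Fin n → Mat ι, IsPOVM M ∧
    r = ∑ i, lam i * ((M i * σ i).trace).re}

/-- Trace norm `‖A‖₁ = Tr √(AᴴA)`. -/
noncomputable def traceNorm (A : Mat ι) : ℝ :=
  ((Matrix.posSemidef_conjTranspose_mul_self A).1.eigenvectorUnitary.1 *
    Matrix.diagonal (((↑) : ℝ → ℂ) ∘ (fun x : ℝ => √x) ∘ (Matrix.posSemidef_conjTranspose_mul_self A).1.eigenvalues) *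
    (star (Matrix.posSemidef_conjTranspose_mul_self A).1.eigenvectorUnitary : Mat ι)).trace.re

/-- Le Cam deficiency of `Φ` with respect to `Ψ`. -/
noncomputable def deficiency (Φ : MatMap ι κ) (Ψ : MatMap ι μ) : ℝ :=
  sInf {r : ℝ | ∃ α : MatMap μ κ, IsChannel α ∧ r = diamondNorm (Φ - α ∘ₗ Ψ)}

/-! Fix a channel `α` and write `Δ = Φ - α ∘ Ψ`. Every `r` admissible in the order
characterization of `‖Δ‖⋄` comes with a channel `β` such that `r β ± Δ` are completely positive.
Then `γ = r⁻¹ (r β + Δ)` is again a channel (`Δ` is trace-annihilating) and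
`(r/2) γ - Δ = (1/2) (r β - Δ)` is completely positive, so for every POVM `M` the success
probability of `M` on `(Φ ⊗ id) E` is at most that on `(α ∘ Ψ ⊗ id) E` plus `r/2` times that on
`(γ ⊗ id) E`. Data processing (pulling `M` back along the adjoint of a channel, which is again a
POVM) bounds these by `P_succ((Ψ ⊗ id) E)` and `P_succ(E)`. Taking the infimum over `r`, then
over `α`, gives the claim. -/

namespace Matrix

variable {n : Type} [Fintype n]

lemma trace_mul_vecMulVec_star (A : Matrix n n ℂ) (x : n → ℂ) :
    (A * vecMulVec x (star x)).trace = star x ⬝ᵥ (A *ᵥ x) := by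
  rw [mul_vecMulVec, trace_vecMulVec, dotProduct_comm]

lemma PosSemidef.trace_mul_nonneg {A B : Matrix n n ℂ} (hA : A.PosSemidef) (hB : B.PosSemidef) :
    0 ≤ (A * B).trace := by
  obtain ⟨m, v, rfl⟩ := posSemidef_iff_eq_sum_vecMulVec.mp hB
  rw [Matrix.mul_sum, trace_sum]
  exact Finset.sum_nonneg fun i _ => by
    rw [trace_mul_vecMulVec_star]; exact hA.dotProduct_mulVec_nonneg _

lemma PosSemidef.re_trace_mul_le {M A B : Matrix n n ℂ} (hM : M.PosSemidef)
    (hAB : (B - A).PosSemidef) : (M * A).trace.re ≤ (M * B).trace.re := by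
  have := (Complex.nonneg_iff.mp (hM.trace_mul_nonneg hAB)).1
  rw [Matrix.mul_sub, trace_sub, Complex.sub_re] at this
  linarith

variable [DecidableEq n]

lemma posSemidef_of_forall_dotProduct_mulVec_nonneg {A : Matrix n n ℂ}
    (hA : ∀ x, 0 ≤ star x ⬝ᵥ (A *ᵥ x)) : A.PosSemidef := by
  rw [← isPositive_toEuclideanLin_iff, LinearMap.isPositive_iff_complex]
  intro x
  have hx : inner ℂ (A.toEuclideanLin x) x = star (star x.ofLp ⬝ᵥ (A *ᵥ x.ofLp)) := by
    rw [EuclideanSpace.inner_eq_star_dotProduct, ofLp_toLpLin, toLin'_apply, star_dotProduct,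
      star_star, dotProduct_comm]
  obtain ⟨hre, him⟩ := Complex.nonneg_iff.mp (hA x.ofLp)
  rw [hx]
  refine ⟨Complex.ext (by simp) (by simp [← him]), by simpa using hre⟩

end Matrix

section Maps

variable {τ : Type} [Fintype τ] [DecidableEq τ]

lemma tensorId_add_apply (φ ψ : MatMap ι κ) (X : Mat (ι × τ)) :
    tensorId (φ + ψ) τ X = tensorId φ τ X + tensorId ψ τ X := rfl

lemma tensorId_comp_apply (ψ : MatMap κ μ) (φ : MatMap ι κ) (X : Mat (ι × τ)) :
    tensorId (ψ ∘ₗ φ) τ X = tensorId ψ τ (tensorId φ τ X) := rfl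

lemma IsTP.tensorId {φ : MatMap ι κ} (hφ : IsTP φ) : IsTP (tensorId φ τ) := fun X => by
  simp only [Matrix.trace, Matrix.diag, Fintype.sum_prod_type_right]
  exact Finset.sum_congr rfl fun p _ => hφ (Matrix.of fun i j => X (i, p) (j, p))

lemma IsTP.comp {ψ : MatMap κ μ} {φ : MatMap ι κ} (hψ : IsTP ψ) (hφ : IsTP φ) :
    IsTP (ψ ∘ₗ φ) := fun X => (hψ (φ X)).trans (hφ X)

lemma IsCP.add {φ ψ : MatMap ι κ} (hφ : IsCP φ) (hψ : IsCP ψ) : IsCP (φ + ψ) :=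
  fun l X hX => (hφ l X hX).add (hψ l X hX)

lemma IsCP.smul {φ : MatMap ι κ} (hφ : IsCP φ) {c : ℂ} (hc : 0 ≤ c) : IsCP (c • φ) :=
  fun l X hX => (hφ l X hX).smul hc

lemma IsCP.comp {ψ : MatMap κ μ} {φ : MatMap ι κ} (hψ : IsCP ψ) (hφ : IsCP φ) :
    IsCP (ψ ∘ₗ φ) :=
  fun l X hX => hψ l _ (hφ l X hX)

lemma IsChannel.comp {ψ : MatMap κ μ} {φ : MatMap ι κ} (hψ : IsChannel ψ) (hφ : IsChannel φ) :
    IsChannel (ψ ∘ₗ φ) :=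
  ⟨hψ.1.comp hφ.1, hψ.2.comp hφ.2⟩

lemma IsChannel.isState_tensorId {φ : MatMap ι κ} (hφ : IsChannel φ) {l : ℕ}
    {ρ : Mat (ι × Fin l)} (hρ : IsState ρ) : IsState (tensorId φ (Fin l) ρ) :=
  ⟨hφ.1 l ρ hρ.1, by rw [hφ.2.tensorId, hρ.2]⟩

lemma isChannel_inv_smul_smul_add {β Δ : MatMap ι κ} (hβ : IsTP β) {r : ℝ} (hr : 0 < r)
    (hΔ : ∀ X, (Δ X).trace = 0) (hCP : IsCP ((r : ℂ) • β + Δ)) :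
    IsChannel ((r : ℂ)⁻¹ • ((r : ℂ) • β + Δ)) := by
  refine ⟨hCP.smul (by exact_mod_cast (inv_pos.mpr hr).le), fun X => ?_⟩
  have hr' : (r : ℂ) ≠ 0 := by exact_mod_cast hr.ne'
  simp only [LinearMap.smul_apply, LinearMap.add_apply, Matrix.trace_smul, Matrix.trace_add, hΔ,
    hβ X, smul_eq_mul, add_zero, inv_mul_cancel_left₀ hr']

lemma isChannel_erasure {ρ : Mat κ} (hρ : IsState ρ) : IsChannel (erasure (ι := ι) ρ) := by
  refine ⟨fun l X hX => ?_, fun X => ?_⟩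
  · have hblocks : tensorId (erasure (ι := ι) ρ) (Fin l) X
        = ρ ⊗ₖ ∑ i, X.submatrix (fun p => (i, p)) (fun p => (i, p)) := by
      ext ⟨a, p⟩ ⟨b, q⟩
      simp [tensorId, erasure, Matrix.trace, Matrix.kroneckerMap_apply, Matrix.sum_apply, mul_comm]
    rw [hblocks]
    exact hρ.1.kronecker (Matrix.posSemidef_sum _ fun i _ => hX.submatrix _)
  · simp [erasure, hρ.2]

lemma exists_isState [Nonempty κ] : ∃ ρ : Mat κ, IsState ρ := by
  obtain ⟨e⟩ := ‹Nonempty κ›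
  refine ⟨Matrix.diagonal (Pi.single e 1), Matrix.PosSemidef.diagonal ?_, ?_⟩
  · exact Pi.single_nonneg.mpr zero_le_one
  · simp

lemma IsTP.nonempty {φ : MatMap ι κ} (hφ : IsTP φ) [Nonempty ι] : Nonempty κ := by
  by_contra hκ
  rw [not_nonempty_iff] at hκ
  simpa [eq_comm] using hφ 1

end Maps

def IsPositiveMap (T : MatMap ι κ) : Prop := ∀ X : Mat ι, X.PosSemidef → (T X).PosSemidef

lemma IsCP.isPositiveMap_tensorId {φ : MatMap ι κ} (hφ : IsCP φ) (l : ℕ) :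
    IsPositiveMap (tensorId φ (Fin l)) :=
  hφ l

section Adjoint

lemma trace_adjointMap_mul (T : MatMap ι κ) (M : Mat κ) (X : Mat ι) :
    (adjointMap T M * X).trace = (M * T X).trace := by
  have hX : X = ∑ i, ∑ j, X i j • Matrix.single i j 1 := by
    simpa [Matrix.smul_single] using X.matrix_eq_sum_single
  rw [hX]
  simp only [map_sum, map_smul, Matrix.mul_sum, Matrix.mul_smul, Matrix.trace_sum,
    Matrix.trace_smul, Matrix.trace_mul_comm _ (Matrix.single _ _ _), Matrix.trace_single_mul,
    one_smul]
  rfl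

lemma adjointMap_one {T : MatMap ι κ} (hT : IsTP T) : adjointMap T 1 = 1 := by
  ext i j
  change (1 * T (Matrix.single j i 1)).trace = (1 : Mat ι) i j
  rw [one_mul, hT]
  rcases eq_or_ne i j with rfl | hij
  · rw [Matrix.trace_single_eq_same, Matrix.one_apply_eq]
  · rw [Matrix.trace_single_eq_of_ne j i 1 hij.symm, Matrix.one_apply_ne hij]

lemma IsPositiveMap.adjointMap_posSemidef {T : MatMap ι κ} (hT : IsPositiveMap T) {M : Mat κ}
    (hM : M.PosSemidef) : (adjointMap T M).PosSemidef :=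
  Matrix.posSemidef_of_forall_dotProduct_mulVec_nonneg fun x => by
    rw [← Matrix.trace_mul_vecMulVec_star, trace_adjointMap_mul]
    exact hM.trace_mul_nonneg (hT _ (Matrix.posSemidef_vecMulVec_self_star x))

lemma IsPOVM.adjointMap {n : ℕ} {M : Fin n → Mat κ} (hM : IsPOVM M) {T : MatMap ι κ}
    (hT : IsPositiveMap T) (hTP : IsTP T) : IsPOVM fun i => adjointMap T (M i) :=
  ⟨fun i => hT.adjointMap_posSemidef (hM.1 i), by rw [← map_sum, hM.2, adjointMap_one hTP]⟩

end Adjoint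

section Ensemble

variable {n : ℕ} {lam : Fin n → ℝ}

def successProb (lam : Fin n → ℝ) (σ M : Fin n → Mat ι) : ℝ :=
  ∑ i, lam i * ((M i * σ i).trace).re

lemma successProb_add (σ τ M : Fin n → Mat ι) :
    successProb lam (fun i => σ i + τ i) M = successProb lam σ M + successProb lam τ M := by
  simp only [successProb, Matrix.trace_add, Complex.add_re, mul_add,
    Finset.sum_add_distrib]

lemma successProb_smul (c : ℝ) (σ M : Fin n → Mat ι) :
    successProb lam (fun i => (c : ℂ) • σ i) M = c * successProb lam σ M := by
  simp only [successProb, Matrix.mul_smul, Matrix.trace_smul, smul_eq_mul, Complex.re_ofReal_mul,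
    Finset.mul_sum]
  exact Finset.sum_congr rfl fun i _ => by ring

lemma successProb_le_of_posSemidef_sub (hlam : ∀ i, 0 ≤ lam i) {σ τ M : Fin n → Mat ι}
    (hM : ∀ i, (M i).PosSemidef) (hστ : ∀ i, (τ i - σ i).PosSemidef) :
    successProb lam σ M ≤ successProb lam τ M :=
  Finset.sum_le_sum fun i _ =>
    mul_le_mul_of_nonneg_left ((hM i).re_trace_mul_le (hστ i)) (hlam i)

lemma successProb_map (T : MatMap ι κ) (σ : Fin n → Mat ι) (M : Fin n → Mat κ) :
    successProb lam (fun i => T (σ i)) M = successProb lam σ fun i => adjointMap T (M i) := by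
  simp only [successProb, trace_adjointMap_mul]

lemma IsPOVM.re_trace_mul_le_one {M : Fin n → Mat ι} (hM : IsPOVM M) {ρ : Mat ι}
    (hρ : IsState ρ) (i : Fin n) : ((M i * ρ).trace).re ≤ 1 := by
  have htotal : ∑ j, ((M j * ρ).trace).re = 1 := by
    rw [← Complex.re_sum, ← Matrix.trace_sum, ← Finset.sum_mul, hM.2, one_mul, hρ.2, Complex.one_re]
  exact htotal ▸ Finset.single_le_sum
    (fun j _ => (Complex.nonneg_iff.mp ((hM.1 j).trace_mul_nonneg hρ.1)).1) (Finset.mem_univ i)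

lemma IsEnsemble.tensorId {l : ℕ} {σ : Fin n → Mat (ι × Fin l)}
    (hE : IsEnsemble lam σ) {φ : MatMap ι κ} (hφ : IsChannel φ) :
    IsEnsemble lam fun i => tensorId φ (Fin l) (σ i) :=
  ⟨hE.1, hE.2.1, fun i => hφ.isState_tensorId (hE.2.2 i)⟩

variable {σ : Fin n → Mat ι}

lemma IsState.nonempty {ρ : Mat ι} (hρ : IsState ρ) : Nonempty ι := by
  by_contra hι
  rw [not_nonempty_iff] at hι
  simpa using hρ.2

lemma IsEnsemble.nonempty (hE : IsEnsemble lam σ) : Nonempty ι := by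
  obtain ⟨i⟩ : Nonempty (Fin n) := by
    by_contra hn
    rw [not_nonempty_iff] at hn
    simpa using hE.2.1
  exact (hE.2.2 i).nonempty

lemma IsEnsemble.successProb_nonneg (hE : IsEnsemble lam σ) {M : Fin n → Mat ι}
    (hM : ∀ i, (M i).PosSemidef) : 0 ≤ successProb lam σ M :=
  Finset.sum_nonneg fun i _ => mul_nonneg (hE.1 i).le
    (Complex.nonneg_iff.mp ((hM i).trace_mul_nonneg (hE.2.2 i).1)).1

lemma IsEnsemble.successProb_le_one (hE : IsEnsemble lam σ) {M : Fin n → Mat ι}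
    (hM : IsPOVM M) : successProb lam σ M ≤ 1 :=
  calc successProb lam σ M ≤ ∑ i, lam i * 1 := Finset.sum_le_sum fun i _ =>
          mul_le_mul_of_nonneg_left (hM.re_trace_mul_le_one (hE.2.2 i) i) (hE.1 i).le
    _ = 1 := by simpa using hE.2.1

lemma IsEnsemble.successProb_le_pSucc (hE : IsEnsemble lam σ) {M : Fin n → Mat ι}
    (hM : IsPOVM M) : successProb lam σ M ≤ pSucc lam σ :=
  le_csSup ⟨1, fun _ ⟨_, hM', hv⟩ => hv ▸ hE.successProb_le_one hM'⟩ ⟨M, hM, rfl⟩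

lemma IsEnsemble.pSucc_nonneg (hE : IsEnsemble lam σ) : 0 ≤ pSucc lam σ :=
  Real.sSup_nonneg fun _ ⟨_, hM, hv⟩ => hv ▸ hE.successProb_nonneg hM.1

lemma IsEnsemble.successProb_map_le_pSucc (hE : IsEnsemble lam σ) {T : MatMap ι κ}
    (hT : IsPositiveMap T) (hTP : IsTP T) {M : Fin n → Mat κ} (hM : IsPOVM M) :
    successProb lam (fun i => T (σ i)) M ≤ pSucc lam σ :=
  successProb_map T σ M ▸ hE.successProb_le_pSucc (hM.adjointMap hT hTP)

end Ensemble

lemma le_add_csInf_mul {S : Set ℝ} (hS : S.Nonempty) {a b c : ℝ} (hc : 0 ≤ c)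
    (h : ∀ r ∈ S, a ≤ b + r * c) : a ≤ b + sInf S * c := by
  rcases hc.eq_or_lt with rfl | hc
  · obtain ⟨r, hr⟩ := hS
    simpa using h r hr
  · have : (a - b) / c ≤ sInf S :=
      le_csInf hS fun r hr => by rw [div_le_iff₀ hc]; linarith [h r hr]
    rw [div_le_iff₀ hc] at this
    linarith

lemma diamondNorm_set_nonempty {φ₁ φ₂ : MatMap ι κ} (h₁ : IsChannel φ₁) (h₂ : IsChannel φ₂) :
    {r : ℝ | 0 < r ∧ ∃ α : MatMap ι κ, IsChannel α ∧
      IsCP ((r : ℂ) • α - (φ₁ - φ₂)) ∧ IsCP ((r : ℂ) • α + (φ₁ - φ₂))}.Nonempty := by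
  have hTP : IsTP ((1 / 2 : ℂ) • (φ₁ + φ₂)) := fun X => by
    simp only [LinearMap.smul_apply, LinearMap.add_apply, Matrix.trace_smul, Matrix.trace_add,
      h₁.2 X, h₂.2 X, smul_eq_mul]
    ring
  refine ⟨2, two_pos, (1 / 2 : ℂ) • (φ₁ + φ₂), ⟨(h₁.1.add h₂.1).smul (by positivity), hTP⟩, ?_, ?_⟩
  · rw [show ((2 : ℝ) : ℂ) • (1 / 2 : ℂ) • (φ₁ + φ₂) - (φ₁ - φ₂) = (2 : ℂ) • φ₂ by
      push_cast; module]
    exact h₂.1.smul (by norm_num)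
  · rw [show ((2 : ℝ) : ℂ) • (1 / 2 : ℂ) • (φ₁ + φ₂) + (φ₁ - φ₂) = (2 : ℂ) • φ₁ by
      push_cast; module]
    exact h₁.1.smul (by norm_num)

lemma pSucc_tensorId_le_of_isCP {Φ : MatMap ι κ} {Ψ : MatMap ι μ} {α : MatMap μ κ}
    {β : MatMap ι κ} (hΦ : IsTP Φ) (hΨ : IsChannel Ψ) (hα : IsChannel α) (hβ : IsChannel β)
    {r : ℝ} (hr : 0 < r) (hminus : IsCP ((r : ℂ) • β - (Φ - α ∘ₗ Ψ)))
    (hplus : IsCP ((r : ℂ) • β + (Φ - α ∘ₗ Ψ))) {l n : ℕ} {lam : Fin n → ℝ}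
    {σ : Fin n → Mat (ι × Fin l)} (hE : IsEnsemble lam σ) :
    pSucc lam (fun i => tensorId Φ (Fin l) (σ i)) ≤
      pSucc lam (fun i => tensorId Ψ (Fin l) (σ i)) + r / 2 * pSucc lam σ := by
  set Δ := Φ - α ∘ₗ Ψ
  set γ := (r : ℂ)⁻¹ • ((r : ℂ) • β + Δ)
  have hΔ : ∀ X, (Δ X).trace = 0 := fun X => by
    rw [LinearMap.sub_apply, Matrix.trace_sub, hΦ, (hα.comp hΨ).2, sub_self]
  have hγ : IsChannel γ := isChannel_inv_smul_smul_add hβ.2 hr hΔ hplus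
  have hγΔ : IsCP (((r / 2 : ℝ) : ℂ) • γ - Δ) := by
    rw [show ((r / 2 : ℝ) : ℂ) • γ - Δ = (1 / 2 : ℂ) • ((r : ℂ) • β - Δ) by
      rw [smul_smul, show ((r / 2 : ℝ) : ℂ) * (r : ℂ)⁻¹ = 1 / 2 by push_cast; field_simp]
      module]
    exact hminus.smul (by positivity)
  have hEΨ := hE.tensorId hΨ
  refine Real.sSup_le (fun _ ⟨M, hM, hv⟩ => hv ▸ ?_)
    (add_nonneg hEΨ.pSucc_nonneg (mul_nonneg (by positivity) hE.pSucc_nonneg))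
  calc successProb lam (fun i => tensorId Φ (Fin l) (σ i)) M
      = successProb lam (fun i => tensorId α (Fin l) (tensorId Ψ (Fin l) (σ i))) M
        + successProb lam (fun i => tensorId Δ (Fin l) (σ i)) M := by
        rw [← successProb_add]
        congr 2 with i
        rw [← tensorId_comp_apply, ← tensorId_add_apply, add_sub_cancel]
    _ ≤ successProb lam (fun i => tensorId α (Fin l) (tensorId Ψ (Fin l) (σ i))) M
        + r / 2 * successProb lam (fun i => tensorId γ (Fin l) (σ i)) M := by
        rw [← successProb_smul]
        gcongr
        exact successProb_le_of_posSemidef_sub (fun i => (hE.1 i).le) hM.1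
          fun i => hγΔ l (σ i) (hE.2.2 i).1
    _ ≤ pSucc lam (fun i => tensorId Ψ (Fin l) (σ i)) + r / 2 * pSucc lam σ := by
        gcongr
        · exact hEΨ.successProb_map_le_pSucc (hα.1.isPositiveMap_tensorId l) hα.2.tensorId hM
        · exact hE.successProb_map_le_pSucc (hγ.1.isPositiveMap_tensorId l) hγ.2.tensorId hM

lemma pSucc_tensorId_le_add_diamondNorm {Φ : MatMap ι κ} {Ψ : MatMap ι μ} {α : MatMap μ κ}
    (hΦ : IsChannel Φ) (hΨ : IsChannel Ψ) (hα : IsChannel α) {l n : ℕ} {lam : Fin n → ℝ}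
    {σ : Fin n → Mat (ι × Fin l)} (hE : IsEnsemble lam σ) :
    pSucc lam (fun i => tensorId Φ (Fin l) (σ i)) ≤
      pSucc lam (fun i => tensorId Ψ (Fin l) (σ i)) +
        diamondNorm (Φ - α ∘ₗ Ψ) * (pSucc lam σ / 2) :=
  le_add_csInf_mul (diamondNorm_set_nonempty hΦ (hα.comp hΨ))
    (by have := hE.pSucc_nonneg; positivity) fun r ⟨hr, _, hβ, hminus, hplus⟩ =>
      (pSucc_tensorId_le_of_isCP hΦ.2 hΨ hα hβ hr hminus hplus hE).trans_eq (by ring)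

theorem deficiency_le_imp_pSucc {h k k' : ℕ}
    (Φ : MatMap (Fin h) (Fin k)) (Ψ : MatMap (Fin h) (Fin k'))
    (hΦ : IsChannel Φ) (hΨ : IsChannel Ψ) (ε : ℝ)
    (hδ : deficiency Φ Ψ ≤ ε) :
    ∀ (k₀ n : ℕ) (lam : Fin n → ℝ) (σ : Fin n → Mat (Fin h × Fin k₀)),
      IsEnsemble lam σ →
      pSucc lam (fun i => tensorId Φ (Fin k₀) (σ i)) ≤
        pSucc lam (fun i => tensorId Ψ (Fin k₀) (σ i)) + ε / 2 * pSucc lam σ := by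
  intro k₀ n lam σ hE
  have : Nonempty (Fin h) := hE.nonempty.map Prod.fst
  have : Nonempty (Fin k) := hΦ.2.nonempty
  obtain ⟨ρ, hρ⟩ := exists_isState (κ := Fin k)
  -- without a channel `Fin k' → Fin k`, `deficiency` would be the junk value `sInf ∅ = 0`
  have hchannels : {r | ∃ α : MatMap (Fin k') (Fin k), IsChannel α ∧
      r = diamondNorm (Φ - α ∘ₗ Ψ)}.Nonempty := ⟨_, _, isChannel_erasure hρ, rfl⟩
  have hp := hE.pSucc_nonneg
  calc pSucc lam (fun i => tensorId Φ (Fin k₀) (σ i))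
      ≤ pSucc lam (fun i => tensorId Ψ (Fin k₀) (σ i)) + deficiency Φ Ψ * (pSucc lam σ / 2) :=
        le_add_csInf_mul hchannels (by positivity) fun _ ⟨_, hα, hr⟩ =>
          hr ▸ pSucc_tensorId_le_add_diamondNorm hΦ hΨ hα hE
    _ ≤ pSucc lam (fun i => tensorId Ψ (Fin k₀) (σ i)) + ε * (pSucc lam σ / 2) := by gcongr
    _ = pSucc lam (fun i => tensorId Ψ (Fin k₀) (σ i)) + ε / 2 * pSucc lam σ := by ring
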